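/- Let Ω ⊂ ℝⁿ be open and u ∈ C¹(Ω;ℝ^h) with Φ : ℝ^h → ℝ continuous and nonnegative, and let φ(z) = d_Φ(p,z) for a fixed p ∈ ℝ^h. Then for a.e. x ∈ Ω, |∇(φ∘u)(x)| ≤ √(2Φ(u(x))) |∇u(x)|. -/

import Mathlib

/-!
Near a point `q`, the weighted length of the straight segment from `z` to `w` is at most
`M ‖w - z‖` for any `M > √(2Φ q)`, so by the triangle inequality for `d_Φ` (concatenate almost
minimising curves, reparametrised by a smooth transition function to keep the concatenation `C¹`)
the function `φ = d_Φ(p, ·)` is `M`-Lipschitz near `q`. Hence `φ ∘ u` is locally Lipschitz on `Ω`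
and differentiable a.e. by Rademacher's theorem. At a point of differentiability, difference
quotients along lines give `‖∇(φ ∘ u)(x) v‖ ≤ M ‖∇u(x) v‖`; let `M ↓ √(2Φ(u x))` and bound the
operator norm of `∇u(x)` by its Frobenius norm.
-/

open MeasureTheory

/-- The degenerate Riemannian distance induced by the conformal factor `√(2Φ)`. -/
noncomputable def dPhi {h : ℕ} (Φ : EuclideanSpace ℝ (Fin h) → ℝ)
    (a b : EuclideanSpace ℝ (Fin h)) : ℝ :=
  sInf { r : ℝ | ∃ γ : ℝ → EuclideanSpace ℝ (Fin h), ContDiff ℝ 1 γ ∧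
    γ 0 = a ∧ γ 1 = b ∧
    r = ∫ t in (0:ℝ)..1, Real.sqrt (2 * Φ (γ t)) * ‖deriv γ t‖ }

/-- The Frobenius norm of the Jacobian of `u` at `x`. -/
noncomputable def frobJac {n h : ℕ}
    (u : EuclideanSpace ℝ (Fin n) → EuclideanSpace ℝ (Fin h))
    (x : EuclideanSpace ℝ (Fin n)) : ℝ :=
  Real.sqrt (∑ i, ∑ j, (fderiv ℝ u x (EuclideanSpace.single j 1) i) ^ 2)

open Filter Topology Set
open scoped NNReal

theorem ContinuousLinearMap.opNorm_le_sqrt_sum_norm_sq_apply_single {ι F : Type*} [Fintype ι]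
    [DecidableEq ι] [NormedAddCommGroup F] [NormedSpace ℝ F]
    (A : EuclideanSpace ℝ ι →L[ℝ] F) :
    ‖A‖ ≤ √(∑ j, ‖A (EuclideanSpace.single j 1)‖ ^ 2) := by
  refine A.opNorm_le_bound (Real.sqrt_nonneg _) fun v => ?_
  have hv : v = ∑ j, v j • EuclideanSpace.single j (1 : ℝ) := by
    simpa [EuclideanSpace.basisFun_apply] using ((EuclideanSpace.basisFun ι ℝ).sum_repr v).symm
  calc ‖A v‖ ≤ ∑ j, ‖v j‖ * ‖A (EuclideanSpace.single j 1)‖ := by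
        conv_lhs => rw [hv, map_sum]
        exact (norm_sum_le _ _).trans_eq (by simp [norm_smul])
    _ ≤ √(∑ j, ‖v j‖ ^ 2) * √(∑ j, ‖A (EuclideanSpace.single j 1)‖ ^ 2) :=
        Real.sum_mul_le_sqrt_mul_sqrt _ _ _
    _ = _ := by rw [← EuclideanSpace.norm_sq_eq, Real.sqrt_sq (norm_nonneg v), mul_comm]

theorem LocallyLipschitzOn.ae_differentiableAt {E F : Type*} [NormedAddCommGroup E]
    [NormedSpace ℝ E] [FiniteDimensional ℝ E] [MeasurableSpace E] [BorelSpace E]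
    [NormedAddCommGroup F] [NormedSpace ℝ F] [FiniteDimensional ℝ F]
    {μ : Measure E} [μ.IsAddHaarMeasure] {s : Set E} {f : E → F}
    (hf : LocallyLipschitzOn s f) (hs : IsOpen s) :
    ∀ᵐ x ∂μ, x ∈ s → DifferentiableAt ℝ f x := by
  suffices μ {x | x ∈ s ∧ ¬DifferentiableAt ℝ f x} = 0 by
    filter_upwards [measure_eq_zero_iff_ae_notMem.1 this] with x hx hxs
    by_contra hnd
    exact hx ⟨hxs, hnd⟩
  refine measure_null_of_locally_null _ fun x ⟨hxs, _⟩ => ?_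
  obtain ⟨K, t, ht, hlip⟩ := hf hxs
  rw [hs.nhdsWithin_eq hxs] at ht
  refine ⟨_, inter_mem_nhdsWithin _ (interior_mem_nhds.2 ht), ?_⟩
  have hae := (hlip.mono interior_subset).ae_differentiableWithinAt_of_mem (μ := μ)
  refine measure_mono_null (fun y ⟨⟨_, hyd⟩, hy⟩ => ?_) (ae_iff.1 hae)
  exact fun hdiff => hyd ((hdiff hy).differentiableAt (isOpen_interior.mem_nhds hy))

theorem LocallyLipschitz.comp_locallyLipschitzOn {α β γ : Type*} [PseudoEMetricSpace α]
    [PseudoEMetricSpace β] [PseudoEMetricSpace γ] {f : β → γ} {g : α → β} {s : Set α}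
    (hf : LocallyLipschitz f) (hg : LocallyLipschitzOn s g) :
    LocallyLipschitzOn s (f ∘ g) := by
  intro x hx
  obtain ⟨Kg, t, ht, hgL⟩ := hg hx
  obtain ⟨Kf, V, hV, hfL⟩ := hf (g x)
  refine ⟨Kf * Kg, t ∩ g ⁻¹' V, inter_mem ht (hg.continuousOn x hx hV), ?_⟩
  exact hfL.comp (hgL.mono inter_subset_left)
    ((mapsTo_preimage g V).mono_left inter_subset_right)

theorem ContDiffOn.locallyLipschitzOn_of_isOpen {E F : Type*} [NormedAddCommGroup E]
    [NormedSpace ℝ E] [NormedAddCommGroup F] [NormedSpace ℝ F] {s : Set E} {f : E → F}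
    (hf : ContDiffOn ℝ 1 f s) (hs : IsOpen s) : LocallyLipschitzOn s f := by
  intro x hx
  obtain ⟨K, t, ht, hlip⟩ := (hf.contDiffAt (hs.mem_nhds hx)).exists_lipschitzOnWith
  exact ⟨K, t, mem_nhdsWithin_of_mem_nhds ht, hlip⟩

theorem norm_fderiv_apply_le_of_eventually_norm_sub_le {E F G : Type*} [NormedAddCommGroup E]
    [NormedSpace ℝ E] [NormedAddCommGroup F] [NormedSpace ℝ F] [NormedAddCommGroup G]
    [NormedSpace ℝ G] {f : E → F} {g : E → G} {x : E} {C : ℝ}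
    (hf : DifferentiableAt ℝ f x) (hg : DifferentiableAt ℝ g x)
    (hfg : ∀ᶠ y in 𝓝 x, ‖f y - f x‖ ≤ C * ‖g y - g x‖) (v : E) :
    ‖fderiv ℝ f x v‖ ≤ C * ‖fderiv ℝ g x v‖ := by
  have hslope_f := (hf.hasFDerivAt.hasLineDerivAt v).tendsto_slope_zero
  have hslope_g := (hg.hasFDerivAt.hasLineDerivAt v).tendsto_slope_zero
  have hline : Tendsto (fun t : ℝ => x + t • v) (𝓝 0) (𝓝 x) := by
    simpa using (Continuous.tendsto (by fun_prop) (0 : ℝ) : Tendsto (fun t : ℝ => x + t • v) _ _)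
  refine le_of_tendsto_of_tendsto hslope_f.norm (hslope_g.norm.const_mul C) ?_
  filter_upwards [nhdsWithin_le_nhds (hline.eventually hfg)] with t ht
  simp only [norm_smul]
  nlinarith [norm_nonneg t⁻¹]

theorem norm_fderiv_le_of_eventually_norm_sub_le {E F G : Type*} [NormedAddCommGroup E]
    [NormedSpace ℝ E] [NormedAddCommGroup F] [NormedSpace ℝ F] [NormedAddCommGroup G]
    [NormedSpace ℝ G] {f : E → F} {g : E → G} {x : E} {C : ℝ}
    (hf : DifferentiableAt ℝ f x) (hg : DifferentiableAt ℝ g x) (hC : 0 ≤ C)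
    (hfg : ∀ᶠ y in 𝓝 x, ‖f y - f x‖ ≤ C * ‖g y - g x‖) :
    ‖fderiv ℝ f x‖ ≤ C * ‖fderiv ℝ g x‖ := by
  refine ContinuousLinearMap.opNorm_le_bound _ (by positivity) fun v => ?_
  calc ‖fderiv ℝ f x v‖ ≤ C * ‖fderiv ℝ g x v‖ :=
        norm_fderiv_apply_le_of_eventually_norm_sub_le hf hg hfg v
    _ ≤ C * (‖fderiv ℝ g x‖ * ‖v‖) := by gcongr; exact (fderiv ℝ g x).le_opNorm v
    _ = C * ‖fderiv ℝ g x‖ * ‖v‖ := by ring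

section lengthDensity

variable {E : Type*} [NormedAddCommGroup E] [NormedSpace ℝ E] {Φ : E → ℝ}

noncomputable def lengthDensity (Φ : E → ℝ) (γ : ℝ → E) (t : ℝ) : ℝ :=
  √(2 * Φ (γ t)) * ‖deriv γ t‖

theorem lengthDensity_nonneg (γ : ℝ → E) (t : ℝ) : 0 ≤ lengthDensity Φ γ t := by
  unfold lengthDensity; positivity

theorem continuous_lengthDensity (hΦ : Continuous Φ) {γ : ℝ → E} (hγ : ContDiff ℝ 1 γ) :
    Continuous (lengthDensity Φ γ) :=
  (Real.continuous_sqrt.comp (continuous_const.mul (hΦ.comp hγ.continuous))).mul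
    (hγ.continuous_deriv le_rfl).norm

theorem lengthDensity_congr {γ δ : ℝ → E} {t : ℝ} (h : γ =ᶠ[𝓝 t] δ) :
    lengthDensity Φ γ t = lengthDensity Φ δ t := by
  rw [lengthDensity, lengthDensity, h.eq_of_nhds, h.deriv_eq]

theorem lengthDensity_eq_zero_of_eventuallyEq_const {γ : ℝ → E} {t : ℝ} {b : E}
    (h : γ =ᶠ[𝓝 t] fun _ => b) : lengthDensity Φ γ t = 0 := by
  rw [lengthDensity_congr h, lengthDensity, deriv_const, norm_zero, mul_zero]

theorem lengthDensity_add_sub_const {α β : ℝ → E} {b : E} {t : ℝ}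
    (h : (α =ᶠ[𝓝 t] fun _ => b) ∨ (β =ᶠ[𝓝 t] fun _ => b)) :
    lengthDensity Φ (fun s => α s + (β s - b)) t = lengthDensity Φ α t + lengthDensity Φ β t := by
  rcases h with hα | hβ
  · rw [lengthDensity_eq_zero_of_eventuallyEq_const hα, zero_add]
    exact lengthDensity_congr (hα.mono fun s hs => by simp [hs])
  · rw [lengthDensity_eq_zero_of_eventuallyEq_const hβ, add_zero]
    exact lengthDensity_congr (hβ.mono fun s hs => by simp [hs])

theorem lengthDensity_comp {γ : ℝ → E} {θ : ℝ → ℝ} (hγ : Differentiable ℝ γ)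
    (hθ : Differentiable ℝ θ) (hθm : Monotone θ) (s : ℝ) :
    lengthDensity Φ (γ ∘ θ) s = deriv θ s * lengthDensity Φ γ (θ s) := by
  rw [lengthDensity, lengthDensity, deriv.scomp s (hγ _) (hθ _), norm_smul, Real.norm_eq_abs,
    abs_of_nonneg hθm.deriv_nonneg, Function.comp_apply]
  ring

theorem integral_lengthDensity_comp (hΦ : Continuous Φ) {γ : ℝ → E} {θ : ℝ → ℝ}
    (hγ : ContDiff ℝ 1 γ) (hθ : ContDiff ℝ 1 θ) (hθm : Monotone θ) (a b : ℝ) :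
    ∫ s in a..b, lengthDensity Φ (γ ∘ θ) s = ∫ t in θ a..θ b, lengthDensity Φ γ t := by
  have hθd := hθ.differentiable one_ne_zero
  simp_rw [lengthDensity_comp (hγ.differentiable one_ne_zero) hθd hθm]
  exact intervalIntegral.integral_deriv_smul_comp (fun s _ => (hθd s).hasDerivAt)
    (hθ.continuous_deriv le_rfl).continuousOn (continuous_lengthDensity hΦ hγ)

end lengthDensity

section dPhi

variable {h : ℕ} {Φ : EuclideanSpace ℝ (Fin h) → ℝ}

theorem dPhi_le_integral_lengthDensity {a b : EuclideanSpace ℝ (Fin h)}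
    {γ : ℝ → EuclideanSpace ℝ (Fin h)} (hγ : ContDiff ℝ 1 γ) (h0 : γ 0 = a) (h1 : γ 1 = b) :
    dPhi Φ a b ≤ ∫ t in (0 : ℝ)..1, lengthDensity Φ γ t := by
  refine csInf_le ⟨0, ?_⟩ ⟨γ, hγ, h0, h1, rfl⟩
  rintro r ⟨δ, -, -, -, rfl⟩
  exact intervalIntegral.integral_nonneg zero_le_one fun t _ => lengthDensity_nonneg δ t

theorem dPhi_le_mul_norm_sub (a b : EuclideanSpace ℝ (Fin h)) {C : ℝ}
    (hC : ∀ z ∈ segment ℝ a b, √(2 * Φ z) ≤ C) :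
    dPhi Φ a b ≤ C * ‖b - a‖ := by
  have hderiv (t : ℝ) : deriv (fun t : ℝ => a + t • (b - a)) t = b - a := by
    simpa using (((hasDerivAt_id t).smul_const (b - a)).const_add a).deriv
  have hbound : ∀ t ∈ uIoc (0 : ℝ) 1,
      ‖lengthDensity Φ (fun t : ℝ => a + t • (b - a)) t‖ ≤ C * ‖b - a‖ := by
    intro t ht
    rw [Real.norm_of_nonneg (lengthDensity_nonneg _ _), lengthDensity, hderiv]
    rw [uIoc_of_le zero_le_one] at ht
    gcongr
    exact hC _ (segment_eq_image' ℝ a b ▸ ⟨t, Ioc_subset_Icc_self ht, rfl⟩)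
  calc dPhi Φ a b ≤ ∫ t in (0 : ℝ)..1, lengthDensity Φ (fun t : ℝ => a + t • (b - a)) t :=
        dPhi_le_integral_lengthDensity (by fun_prop) (by simp) (by simp)
    _ ≤ C * ‖b - a‖ := by
        simpa using (le_abs_self _).trans
          (intervalIntegral.norm_integral_le_of_norm_le_const hbound)

theorem exists_integral_lengthDensity_lt_dPhi_add (a b : EuclideanSpace ℝ (Fin h)) {ε : ℝ}
    (hε : 0 < ε) :
    ∃ γ : ℝ → EuclideanSpace ℝ (Fin h), ContDiff ℝ 1 γ ∧ γ 0 = a ∧ γ 1 = b ∧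
      ∫ t in (0 : ℝ)..1, lengthDensity Φ γ t < dPhi Φ a b + ε := by
  have hne : Set.Nonempty { r : ℝ | ∃ γ : ℝ → EuclideanSpace ℝ (Fin h), ContDiff ℝ 1 γ ∧
      γ 0 = a ∧ γ 1 = b ∧ r = ∫ t in (0 : ℝ)..1, lengthDensity Φ γ t } :=
    ⟨_, fun t : ℝ => a + t • (b - a), by fun_prop, by simp, by simp, rfl⟩
  obtain ⟨_, ⟨γ, hγ, h0, h1, rfl⟩, hlt⟩ := Real.lt_sInf_add_pos hne hε
  exact ⟨γ, hγ, h0, h1, hlt⟩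

/-- The concatenation runs through `γ₁` on `[0, 1/3]`, rests at `b` on `[1/3, 2/3]` and runs
through `γ₂` on `[2/3, 1]`, each reparametrised by the smooth transition function. -/
theorem dPhi_triangle (hΦ : Continuous Φ) (a b c : EuclideanSpace ℝ (Fin h)) :
    dPhi Φ a c ≤ dPhi Φ a b + dPhi Φ b c := by
  refine le_of_forall_pos_le_add fun ε hε => ?_
  obtain ⟨γ₁, hγ₁, h₁0, h₁1, hlt₁⟩ := exists_integral_lengthDensity_lt_dPhi_add (Φ := Φ) a b
    (half_pos hε)
  obtain ⟨γ₂, hγ₂, h₂0, h₂1, hlt₂⟩ := exists_integral_lengthDensity_lt_dPhi_add (Φ := Φ) b c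
    (half_pos hε)
  set θ₁ : ℝ → ℝ := fun s => Real.smoothTransition (3 * s)
  set θ₂ : ℝ → ℝ := fun s => Real.smoothTransition (3 * s - 2)
  have hθ₁ : ContDiff ℝ 1 θ₁ := Real.smoothTransition.contDiff.comp (by fun_prop)
  have hθ₂ : ContDiff ℝ 1 θ₂ := Real.smoothTransition.contDiff.comp (by fun_prop)
  have hθ₁m : Monotone θ₁ :=
    Real.smoothTransition.monotone.comp fun s t hst => by linarith
  have hθ₂m : Monotone θ₂ :=
    Real.smoothTransition.monotone.comp fun s t hst => by linarith
  have hθ₁0 : θ₁ 0 = 0 := by simp [θ₁]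
  have hθ₁1 : θ₁ 1 = 1 := Real.smoothTransition.one_of_one_le (by norm_num)
  have hθ₂0 : θ₂ 0 = 0 := Real.smoothTransition.zero_of_nonpos (by norm_num)
  have hθ₂1 : θ₂ 1 = 1 := Real.smoothTransition.one_of_one_le (by norm_num)
  have hσ : ContDiff ℝ 1 fun s => (γ₁ ∘ θ₁) s + ((γ₂ ∘ θ₂) s - b) :=
    (hγ₁.comp hθ₁).add ((hγ₂.comp hθ₂).sub contDiff_const)
  have hdensity : ∀ s, lengthDensity Φ (fun s => (γ₁ ∘ θ₁) s + ((γ₂ ∘ θ₂) s - b)) s =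
      lengthDensity Φ (γ₁ ∘ θ₁) s + lengthDensity Φ (γ₂ ∘ θ₂) s := by
    intro s
    refine lengthDensity_add_sub_const ?_
    rcases lt_or_ge s (2 / 3) with hs | hs
    · refine Or.inr (eventually_lt_nhds hs |>.mono fun t ht => ?_)
      simp [θ₂, Real.smoothTransition.zero_of_nonpos (by linarith : 3 * t - 2 ≤ 0), h₂0]
    · refine Or.inl (eventually_gt_nhds (by linarith : (1 / 3 : ℝ) < s) |>.mono fun t ht => ?_)
      simp [θ₁, Real.smoothTransition.one_of_one_le (by linarith : 1 ≤ 3 * t), h₁1]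
  have hle := dPhi_le_integral_lengthDensity (Φ := Φ) (a := a) (b := c) hσ
    (by simp [hθ₁0, hθ₂0, h₁0, h₂0]) (by simp [hθ₁1, hθ₂1, h₁1, h₂1])
  simp only [hdensity] at hle
  rw [intervalIntegral.integral_add
    ((continuous_lengthDensity hΦ (hγ₁.comp hθ₁)).intervalIntegrable _ _)
    ((continuous_lengthDensity hΦ (hγ₂.comp hθ₂)).intervalIntegrable _ _),
    integral_lengthDensity_comp hΦ hγ₁ hθ₁ hθ₁m, integral_lengthDensity_comp hΦ hγ₂ hθ₂ hθ₂m]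
    at hle
  rw [hθ₁0, hθ₁1, hθ₂0, hθ₂1] at hle
  linarith

theorem abs_dPhi_sub_le (hΦ : Continuous Φ) (p : EuclideanSpace ℝ (Fin h))
    {z w : EuclideanSpace ℝ (Fin h)} {C : ℝ} (hC : ∀ y ∈ segment ℝ z w, √(2 * Φ y) ≤ C) :
    |dPhi Φ p w - dPhi Φ p z| ≤ C * ‖w - z‖ := by
  have hzw := dPhi_le_mul_norm_sub z w hC
  have hwz := dPhi_le_mul_norm_sub w z (segment_symm ℝ z w ▸ hC)
  rw [norm_sub_rev] at hwz
  have := dPhi_triangle hΦ p z w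
  have := dPhi_triangle hΦ p w z
  rw [abs_le]
  constructor <;> linarith

theorem exists_lipschitzOnWith_dPhi_ball (hΦ : Continuous Φ) (p q : EuclideanSpace ℝ (Fin h))
    {M : ℝ≥0} (hM : √(2 * Φ q) < M) :
    ∃ ρ > 0, LipschitzOnWith M (dPhi Φ p) (Metric.ball q ρ) := by
  have hcont : Continuous fun y => √(2 * Φ y) := by fun_prop
  obtain ⟨ρ, hρ, hball⟩ :=
    Metric.eventually_nhds_iff_ball.1 (hcont.continuousAt.eventually_lt_const hM)
  refine ⟨ρ, hρ, LipschitzOnWith.of_dist_le_mul fun w hw z hz => ?_⟩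
  rw [Real.dist_eq, dist_eq_norm]
  exact abs_dPhi_sub_le hΦ p fun y hy =>
    (hball y ((convex_ball q ρ).segment_subset hz hw hy)).le

theorem locallyLipschitz_dPhi (hΦ : Continuous Φ) (p : EuclideanSpace ℝ (Fin h)) :
    LocallyLipschitz (dPhi Φ p) := by
  intro q
  have hM : √(2 * Φ q) < (√(2 * Φ q) + 1).toNNReal := by
    rw [Real.coe_toNNReal _ (by positivity)]
    linarith
  obtain ⟨ρ, hρ, hlip⟩ := exists_lipschitzOnWith_dPhi_ball hΦ p q hM
  exact ⟨_, _, Metric.ball_mem_nhds q hρ, hlip⟩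

theorem norm_fderiv_dPhi_comp_le {E : Type*} [NormedAddCommGroup E] [NormedSpace ℝ E]
    (hΦ : Continuous Φ) (p : EuclideanSpace ℝ (Fin h)) {u : E → EuclideanSpace ℝ (Fin h)} {x : E}
    (hf : DifferentiableAt ℝ (fun z => dPhi Φ p (u z)) x) (hu : DifferentiableAt ℝ u x) :
    ‖fderiv ℝ (fun z => dPhi Φ p (u z)) x‖ ≤ √(2 * Φ (u x)) * ‖fderiv ℝ u x‖ := by
  have hM : ∀ M > √(2 * Φ (u x)), ‖fderiv ℝ (fun z => dPhi Φ p (u z)) x‖ ≤ M * ‖fderiv ℝ u x‖ := by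
    intro M hM
    have hM0 : 0 ≤ M := (Real.sqrt_nonneg _).trans hM.le
    obtain ⟨ρ, hρ, hlip⟩ := exists_lipschitzOnWith_dPhi_ball hΦ p (u x) (M := M.toNNReal)
      (by rwa [Real.coe_toNNReal _ hM0])
    refine norm_fderiv_le_of_eventually_norm_sub_le hf hu hM0 ?_
    filter_upwards [hu.continuousAt (Metric.ball_mem_nhds _ hρ)] with y hy
    simpa [Real.coe_toNNReal _ hM0, dist_eq_norm] using
      hlip.dist_le_mul _ hy _ (Metric.mem_ball_self hρ)
  exact ge_of_tendsto ((tendsto_id.mul_const _).mono_left nhdsWithin_le_nhds)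
    (eventually_nhdsWithin_of_forall (s := Ioi _) hM)

end dPhi

theorem norm_fderiv_le_frobJac {n h : ℕ}
    (u : EuclideanSpace ℝ (Fin n) → EuclideanSpace ℝ (Fin h)) (x : EuclideanSpace ℝ (Fin n)) :
    ‖fderiv ℝ u x‖ ≤ frobJac u x := by
  refine (ContinuousLinearMap.opNorm_le_sqrt_sum_norm_sq_apply_single _).trans_eq ?_
  rw [frobJac, Finset.sum_comm]
  congr 1
  refine Finset.sum_congr rfl fun j _ => ?_
  simp [EuclideanSpace.norm_sq_eq, Real.norm_eq_abs, sq_abs]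

theorem stmt2_general {n h : ℕ} (Ω : Set (EuclideanSpace ℝ (Fin n))) (hΩ : IsOpen Ω)
    (Φ : EuclideanSpace ℝ (Fin h) → ℝ)
    (hΦcont : Continuous Φ)
    (p : EuclideanSpace ℝ (Fin h))
    (u : EuclideanSpace ℝ (Fin n) → EuclideanSpace ℝ (Fin h))
    (hu : ContDiffOn ℝ 1 u Ω) :
    ∀ᵐ x ∂(volume : Measure (EuclideanSpace ℝ (Fin n))), x ∈ Ω →
      DifferentiableAt ℝ (fun z => dPhi Φ p (u z)) x ∧
      ‖fderiv ℝ (fun z => dPhi Φ p (u z)) x‖ ≤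
        Real.sqrt (2 * Φ (u x)) * frobJac u x := by
  have hdiff : ∀ᵐ x ∂(volume : Measure (EuclideanSpace ℝ (Fin n))), x ∈ Ω →
      DifferentiableAt ℝ (fun z => dPhi Φ p (u z)) x :=
    ((locallyLipschitz_dPhi hΦcont p).comp_locallyLipschitzOn
      (hu.locallyLipschitzOn_of_isOpen hΩ)).ae_differentiableAt hΩ
  filter_upwards [hdiff] with x hx hxΩ
  have hux : DifferentiableAt ℝ u x :=
    (hu.contDiffAt (hΩ.mem_nhds hxΩ)).differentiableAt one_ne_zero
  refine ⟨hx hxΩ, (norm_fderiv_dPhi_comp_le hΦcont p (hx hxΩ) hux).trans ?_⟩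
  gcongr
  exact norm_fderiv_le_frobJac u x

/-- Chain-rule bound: for `u ∈ C¹(Ω;ℝ^h)` and `φ = d_Φ(p,·)`, for a.e. `x ∈ Ω`,
`φ∘u` is differentiable at `x` and `|∇(φ∘u)(x)| ≤ √(2Φ(u(x))) |∇u(x)|`. -/
theorem stmt2 {n h : ℕ} (Ω : Set (EuclideanSpace ℝ (Fin n))) (hΩ : IsOpen Ω)
    (Φ : EuclideanSpace ℝ (Fin h) → ℝ)
    (hΦcont : Continuous Φ) (hΦnonneg : ∀ z, 0 ≤ Φ z)
    (p : EuclideanSpace ℝ (Fin h))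
    (u : EuclideanSpace ℝ (Fin n) → EuclideanSpace ℝ (Fin h))
    (hu : ContDiffOn ℝ 1 u Ω) :
    ∀ᵐ x ∂(volume : Measure (EuclideanSpace ℝ (Fin n))), x ∈ Ω →
      DifferentiableAt ℝ (fun z => dPhi Φ p (u z)) x ∧
      ‖fderiv ℝ (fun z => dPhi Φ p (u z)) x‖ ≤
        Real.sqrt (2 * Φ (u x)) * frobJac u x :=
  stmt2_general Ω hΩ Φ hΦcont p u hu
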